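/- arXiv:math/0405444 — 3 statements merged into one kernel-verified Lean document; each statement's English description precedes it below -/
import Mathlib

section
/- Let X be extensible and n such that det(C(X_n)) ≠ 0. If ω_n^{(n)} = Σ_i k_i α_i^{(n)} is the expression of the last fundamental weight in terms of simple roots, then k_n = det(C(X_{n−1}))/det(C(X_n)), and consequently the order of [ω_n^{(n)}] in P(X_n)/Q(X_n) equals |det(C(X_n))|. -/
open scoped BigOperators

def Xmat (d : ℕ) (C : Matrix (Fin d) (Fin d) ℤ) (n : ℕ) : Matrix (Fin n) (Fin n) ℤ :=
  Matrix.of fun i j =>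
    if h : (i : ℕ) < d ∧ (j : ℕ) < d then C ⟨i, h.1⟩ ⟨j, h.2⟩
    else if (i : ℕ) = (j : ℕ) then 2
    else if (i : ℕ) + 1 = (j : ℕ) ∨ (j : ℕ) + 1 = (i : ℕ) then -1
    else 0

def detX (d : ℕ) (C : Matrix (Fin d) (Fin d) ℤ) (n : ℕ) : ℤ := (Xmat d C n).det

def Δdiff (d : ℕ) (C : Matrix (Fin d) (Fin d) ℤ) : ℤ := detX d C d - detX d C (d - 1)

def Extensible (d : ℕ) (C : Matrix (Fin d) (Fin d) ℤ) : Prop :=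
  Δdiff d C ≠ 0 ∧ detX d C d ≠ 0 ∧ IsCoprime (Δdiff d C) (detX d C d)

def fw (n : ℕ) (i : Fin n) : Fin n → ℤ := Pi.single i 1

def col (d : ℕ) (C : Matrix (Fin d) (Fin d) ℤ) (n : ℕ) (j : Fin n) : Fin n → ℤ :=
  fun i => Xmat d C n i j

def Qlat (d : ℕ) (C : Matrix (Fin d) (Fin d) ℤ) (n : ℕ) : Submodule ℤ (Fin n → ℤ) :=
  Submodule.span ℤ (Set.range (col d C n))

def lastFin (n : ℕ) (h : 0 < n) : Fin n := ⟨n - 1, by omega⟩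

def ASeq (d : ℕ) (C : Matrix (Fin d) (Fin d) ℤ) (a : ℕ → ℤ) : Prop :=
  ∀ n, d ≤ n → detX d C n ≠ 0 → ∀ i : Fin n,
    (-(Δdiff d C)) • fw n i - a (i : ℕ) • fw n (lastFin n i.pos) ∈ Qlat d C n

/-! Beyond the block `C` the matrix `C(X_n)` is tridiagonal, so expanding along the last row and
column gives `det C(X_{n+2}) = 2 det C(X_{n+1}) - det C(X_n)` for `n + 1 ≥ d`. Hence the
determinants `det C(X_n)`, `n ≥ d - 1`, form an arithmetic progression with difference `Δ`, and
two consecutive terms are coprime because `Δ` is coprime to `det C(X_d)`.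

The `(n, n)` cofactor of `C(X_n)` is `det C(X_{n-1})`, so Cramer's rule gives `k_n`. Multiplying
by the adjugate, `z • e_n` lies in the column lattice `Q(X_n)` iff `det C(X_n)` divides
`z * det C(X_{n-1})`, i.e. iff it divides `z`; this pins down the order of `[e_n]`. -/

open Matrix

theorem addOrderOf_eq_natAbs_of_zsmul_eq_zero_iff {G : Type*} [AddGroup G] {x : G} {D : ℤ}
    (h : ∀ z : ℤ, z • x = 0 ↔ D ∣ z) : addOrderOf x = D.natAbs := by
  have h₁ : (addOrderOf x : ℤ) ∣ D := addOrderOf_dvd_iff_zsmul_eq_zero.2 ((h D).2 dvd_rfl)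
  have h₂ : D ∣ addOrderOf x := (h _).1 (by rw [natCast_zsmul, addOrderOf_nsmul_eq_zero])
  simpa using Int.natAbs_eq_of_dvd_dvd h₁ h₂

theorem IsCoprime.add_mul_add_succ_mul {R : Type*} [CommRing R] {a δ : R} (h : IsCoprime δ a)
    (m : R) : IsCoprime (a + m * δ) (a + (m + 1) * δ) := by
  have key := (h.add_mul_left_right m).symm.add_mul_left_right 1
  ring_nf at key ⊢
  exact key

section LinearAlgebra

variable {ι R : Type*} [Fintype ι] [DecidableEq ι] [CommRing R]

theorem Matrix.det_smul_eq_adjugate_mulVec {A : Matrix ι ι R} {x b : ι → R} (h : A *ᵥ x = b) :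
    A.det • x = A.adjugate *ᵥ b := by
  rw [← h, mulVec_mulVec, adjugate_mul, smul_mulVec, one_mulVec]

theorem Matrix.det_mul_apply_of_mulVec_eq_single {A : Matrix ι ι R} {x : ι → R} {i : ι}
    (h : A *ᵥ x = Pi.single i 1) : A.det * x i = A.adjugate i i := by
  simpa [mulVec_single] using congrFun (det_smul_eq_adjugate_mulVec h) i

theorem Matrix.smul_single_mem_range_mulVecLin_iff (A : Matrix ι ι R) {i : ι}
    (hcop : IsCoprime (A.adjugate i i) A.det) (z : R) :
    z • Pi.single i 1 ∈ LinearMap.range A.mulVecLin ↔ A.det ∣ z := by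
  constructor
  · rintro ⟨y, hy⟩
    have hdet : A.det * y i = z * A.adjugate i i := by
      simpa [mulVec_smul, mulVec_single] using
        congrFun (det_smul_eq_adjugate_mulVec (b := z • Pi.single i 1) hy) i
    exact hcop.symm.dvd_of_dvd_mul_right ⟨y i, hdet.symm⟩
  · rintro ⟨w, rfl⟩
    refine ⟨A.adjugate *ᵥ (w • Pi.single i 1), ?_⟩
    rw [mulVecLin_apply, mulVec_mulVec, mul_adjugate, smul_mulVec, one_mulVec, smul_smul]

end LinearAlgebra

theorem addOrderOf_mk_single_eq_natAbs_det {ι : Type*} [Fintype ι] [DecidableEq ι]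
    (A : Matrix ι ι ℤ) {i : ι} (hcop : IsCoprime (A.adjugate i i) A.det) :
    addOrderOf (Submodule.Quotient.mk (Pi.single i 1) :
      (ι → ℤ) ⧸ LinearMap.range A.mulVecLin) = A.det.natAbs :=
  addOrderOf_eq_natAbs_of_zsmul_eq_zero_iff fun z => by
    rw [← Submodule.Quotient.mk_smul, Submodule.Quotient.mk_eq_zero,
      A.smul_single_mem_range_mulVecLin_iff hcop]

section Determinants

variable {R : Type*} [CommRing R] {n : ℕ}

theorem Matrix.det_succ_of_last_row_eq_zero (A : Matrix (Fin (n + 1)) (Fin (n + 1)) R)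
    (h : ∀ j : Fin n, A (Fin.last n) j.castSucc = 0) :
    A.det = A (Fin.last n) (Fin.last n) * (A.submatrix Fin.castSucc Fin.castSucc).det := by
  rw [det_succ_row A (Fin.last n), Fin.sum_univ_castSucc,
    Finset.sum_eq_zero fun j _ => by rw [h j, mul_zero, zero_mul]]
  simp [Fin.succAbove_last, ← two_mul, pow_mul]

theorem Matrix.det_succ_succ_of_tridiagonal_tail (A : Matrix (Fin (n + 2)) (Fin (n + 2)) R)
    (hcol : ∀ i : Fin n, A i.castSucc.castSucc (Fin.last (n + 1)) = 0)
    (hrow : ∀ j : Fin n, A (Fin.last (n + 1)) j.castSucc.castSucc = 0) :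
    A.det = A (Fin.last (n + 1)) (Fin.last (n + 1)) * (A.submatrix Fin.castSucc Fin.castSucc).det
      - A (Fin.last n).castSucc (Fin.last (n + 1)) * A (Fin.last (n + 1)) (Fin.last n).castSucc
        * ((A.submatrix Fin.castSucc Fin.castSucc).submatrix Fin.castSucc Fin.castSucc).det := by
  rw [det_succ_column A (Fin.last (n + 1)), Fin.sum_univ_castSucc, Fin.sum_univ_castSucc,
    Finset.sum_eq_zero fun i _ => by rw [hcol i, mul_zero, zero_mul], zero_add,
    det_succ_of_last_row_eq_zero _ (fun j => by simpa using hrow j)]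
  have hrows : (Fin.last n).castSucc.succAbove ∘ Fin.castSucc = Fin.castSucc ∘ Fin.castSucc :=
    funext fun i => by simp
  simp [Fin.succAbove_last, ← two_mul, pow_mul, hrows]
  ring

end Determinants

section Tail

variable (d : ℕ) (C : Matrix (Fin d) (Fin d) ℤ)

theorem Xmat_submatrix_castSucc (n : ℕ) :
    (Xmat d C (n + 1)).submatrix Fin.castSucc Fin.castSucc = Xmat d C n := by
  ext i j
  simp [Xmat]

theorem Xmat_apply_of_not_lt {n : ℕ} {i j : Fin n} (h : ¬((i : ℕ) < d ∧ (j : ℕ) < d)) :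
    Xmat d C n i j =
      if (i : ℕ) = j then 2 else if (i : ℕ) + 1 = j ∨ (j : ℕ) + 1 = i then -1 else 0 :=
  dif_neg h

theorem detX_add_two {n : ℕ} (h : d ≤ n + 1) :
    detX d C (n + 2) = 2 * detX d C (n + 1) - detX d C n := by
  have hcol : ∀ i : Fin n, Xmat d C (n + 2) i.castSucc.castSucc (Fin.last (n + 1)) = 0 :=
    fun i => by
      rw [Xmat_apply_of_not_lt d C (by simp; omega), if_neg (by simp; omega),
        if_neg (by simp; omega)]
  have hrow : ∀ j : Fin n, Xmat d C (n + 2) (Fin.last (n + 1)) j.castSucc.castSucc = 0 :=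
    fun j => by
      rw [Xmat_apply_of_not_lt d C (by simp; omega), if_neg (by simp; omega),
        if_neg (by simp; omega)]
  rw [detX, det_succ_succ_of_tridiagonal_tail _ hcol hrow, Xmat_submatrix_castSucc,
    Xmat_submatrix_castSucc, Xmat_apply_of_not_lt d C (by simp; omega),
    Xmat_apply_of_not_lt d C (by simp; omega), Xmat_apply_of_not_lt d C (by simp; omega)]
  simp [detX]

theorem detX_sub_one_add (hd : 1 ≤ d) :
    ∀ m : ℕ, detX d C (d - 1 + m) = detX d C (d - 1) + m * Δdiff d C
  | 0 => by simp
  | 1 => by rw [Nat.sub_add_cancel hd, Δdiff]; ring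
  | m + 2 => by
    rw [← add_assoc, detX_add_two d C (by omega), detX_sub_one_add hd m, add_assoc,
      detX_sub_one_add hd (m + 1)]
    push_cast
    ring

theorem isCoprime_detX_pred (hd : 1 ≤ d) (hcop : IsCoprime (Δdiff d C) (detX d C d))
    {n : ℕ} (hn : d ≤ n) : IsCoprime (detX d C (n - 1)) (detX d C n) := by
  obtain ⟨m, rfl⟩ := Nat.exists_eq_add_of_le hn
  have hpred : d + m - 1 = d - 1 + m := by omega
  have hsucc : d + m = d - 1 + (m + 1) := by omega
  have hcop₀ : IsCoprime (Δdiff d C) (detX d C (d - 1)) := by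
    refine IsCoprime.of_add_mul_left_right (z := 1) ?_
    rwa [mul_one, add_comm, Δdiff, sub_add_cancel]
  rw [hpred, hsucc, detX_sub_one_add d C hd, detX_sub_one_add d C hd, Nat.cast_succ]
  exact hcop₀.add_mul_add_succ_mul m

theorem adjugate_Xmat_last (m : ℕ) :
    (Xmat d C (m + 1)).adjugate (Fin.last m) (Fin.last m) = detX d C m := by
  rw [adjugate_fin_succ_eq_det_submatrix, Fin.succAbove_last, Xmat_submatrix_castSucc, detX]
  simp [← two_mul, pow_mul]

theorem Qlat_eq_range (n : ℕ) : Qlat d C n = LinearMap.range (Xmat d C n).mulVecLin := by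
  rw [range_mulVecLin]
  rfl

end Tail

theorem lastFin_succ (m : ℕ) (h : 0 < m + 1) : lastFin (m + 1) h = Fin.last m := rfl

/-- If `ω_n = Σ_i k_i α_i` over `ℚ` (the `k_i` are the entries of the last
column of `C(X_n)⁻¹`), then `k_n = det(C(X_{n-1}))/det(C(X_n))`, and the order
of the class of `ω_n` in `P(X_n)/Q(X_n)` equals `|det(C(X_n))|`. -/
theorem tensor_stab_last_coefficient (d : ℕ) (hd : 1 ≤ d)
    (C : Matrix (Fin d) (Fin d) ℤ) (hX : Extensible d C)
    (n : ℕ) (hn : d ≤ n) (hdet : detX d C n ≠ 0)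
    (k : Fin n → ℚ)
    (hk : ∀ i : Fin n, (if i = lastFin n (by omega) then (1 : ℚ) else 0)
        = ∑ j : Fin n, k j * (Xmat d C n i j : ℚ)) :
    k (lastFin n (by omega)) = (detX d C (n - 1) : ℚ) / (detX d C n : ℚ) ∧
    addOrderOf (Submodule.Quotient.mk (fw n (lastFin n (by omega))) :
        (Fin n → ℤ) ⧸ Qlat d C n) = (detX d C n).natAbs := by
  obtain ⟨m, rfl⟩ : ∃ m, n = m + 1 := ⟨n - 1, by omega⟩
  simp only [lastFin_succ, Nat.add_sub_cancel]
  have hadj := adjugate_Xmat_last d C m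
  refine ⟨?_, ?_⟩
  · have hsol : (Int.castRingHom ℚ).mapMatrix (Xmat d C (m + 1)) *ᵥ k =
        Pi.single (Fin.last m) 1 := by
      ext i
      rw [Pi.single_apply]
      refine ((hk i).trans ?_).symm
      simp [mulVec, dotProduct, mul_comm]
    have hdetk := det_mul_apply_of_mulVec_eq_single hsol
    rw [← RingHom.map_det, ← RingHom.map_adjugate, RingHom.mapMatrix_apply, map_apply, hadj]
      at hdetk
    rw [eq_div_iff (by exact_mod_cast hdet), mul_comm]
    exact hdetk
  · have hcop := isCoprime_detX_pred d C hd hX.2.2 hn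
    rw [Nat.add_sub_cancel, ← hadj] at hcop
    rw [Qlat_eq_range, fw]
    exact addOrderOf_mk_single_eq_natAbs_det _ hcop
end

section
/- Let X be extensible with d nodes. There exists a unique sequence of integers (a_i)_{i≥1} such that for every n ≥ d with det(C(X_n)) ≠ 0 and every 1 ≤ i ≤ n, one has (−Δ)·ω_i^{(n)} ≡ a_i·ω_n^{(n)} modulo the root lattice Q(X_n). Moreover a_i = det(C(X_{i−1})) for i > d. -/
/-!
Work in `ℤⁿ ⧸ Q(Xₙ)` with nodes `0, …, n-1`, writing `ωᵢ = natSingle n i` (so `ωₙ = 0`).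
The column of a tail node `j ≥ d` says `ω_{j-1} + ω_{j+1} ≡ 2ωⱼ`, hence `ωᵢ ≡ (n - i)·ω_{n-1}`
for `i ≥ d - 1`. Since `det C(Xₙ)·ω_{n-1} ≡ 0` and `k ↦ det C(X_k)` is arithmetic with difference
`Δ` from `k = d - 1` on, a tail node gets `-Δ·ωᵢ ≡ det C(Xᵢ)·ω_{n-1}`. For a node `i < d`,
let `B = decCorner C` be `C(X)` with its last diagonal entry lowered by one, so that
`det B = Δ`; applying `C(Xₙ)` to the `i`-th column of `adj B`, padded by zeros, gives
`Δ·ωᵢ ≡ -(adj B)_{d-1,i}·(ω_{d-1} - ω_d) ≡ -(adj B)_{d-1,i}·ω_{n-1}`.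

Uniqueness: two solutions differing by `c` at `i` give `c·ω_{n-1} ∈ Q(Xₙ)`, hence, through the
adjugate, `det C(Xₙ) ∣ c·det C(X_{n-1})`. Consecutive determinants are coprime because
`gcd(Δ, det C(X)) = 1`, and `|det C(Xₙ)| → ∞` because `Δ ≠ 0`, so `c = 0`.
-/

open scoped BigOperators

open scoped Matrix

lemma Int.eq_zero_of_forall_add_mul_dvd {a b c : ℤ} (hb : b ≠ 0)
    (h : ∀ j : ℕ, a + j * b ≠ 0 → a + j * b ∣ c) : c = 0 := by
  set j := a.natAbs + c.natAbs + 1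
  have hj : (j : ℤ) = |a| + |c| + 1 := by simp [j]
  have hjb : (j : ℤ) ≤ |(j : ℤ) * b| := by
    rw [abs_mul, Nat.abs_cast]
    exact le_mul_of_one_le_right (by positivity) (Int.one_le_abs hb)
  have hlt : |c| < |a + j * b| := by
    have := abs_sub (a + j * b) a
    rw [add_sub_cancel_left] at this
    linarith
  exact Int.eq_zero_of_abs_lt_dvd
    ((abs_dvd _ _).2 (h j (abs_pos.1 ((abs_nonneg c).trans_lt hlt)))) hlt

section Determinants

open Matrix

variable {d : ℕ} (C : Matrix (Fin d) (Fin d) ℤ)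

lemma xmat_apply_of_le {n : ℕ} {i j : Fin n} (h : d ≤ i ∨ d ≤ j) :
    Xmat d C n i j = if (i : ℕ) = j then 2
      else if (i : ℕ) + 1 = j ∨ (j : ℕ) + 1 = i then -1 else 0 := by
  rw [Xmat, of_apply, dif_neg (by omega)]

lemma xmat_self : Xmat d C d = C := by
  ext i j
  simp [Xmat]

lemma xmat_submatrix {k n : ℕ} (f g : Fin k → Fin n) (hf : ∀ x, (f x : ℕ) = x)
    (hg : ∀ x, (g x : ℕ) = x) : (Xmat d C n).submatrix f g = Xmat d C k := by
  ext i j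
  simp [Xmat, hf, hg]

lemma adjugate_xmat_last (k : ℕ) :
    (Xmat d C (k + 1)).adjugate (Fin.last k) (Fin.last k) = detX d C k := by
  rw [adjugate_fin_succ_eq_det_submatrix, Fin.succAbove_last,
    xmat_submatrix C Fin.castSucc Fin.castSucc (fun _ => rfl) (fun _ => rfl)]
  simp [detX]

lemma det_xmat_submatrix_succAbove_last_castSucc {m : ℕ} (h : d ≤ m + 1) :
    ((Xmat d C (m + 2)).submatrix (Fin.last (m + 1)).succAbove
      (Fin.last m).castSucc.succAbove).det = -detX d C m := by
  have hcol : ∀ r : Fin (m + 1), r ≠ Fin.last m →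
      Xmat d C (m + 2) r.castSucc (Fin.last (m + 1)) = 0 := by
    intro r hr
    rw [xmat_apply_of_le C (Or.inr (by simp only [Fin.val_last]; omega))]
    simp only [ne_eq, Fin.ext_iff, Fin.val_last, Fin.val_castSucc] at hr ⊢
    omega
  -- The last column of this minor is `(0, …, 0, -1)`.
  rw [det_succ_column _ (Fin.last m), Fintype.sum_eq_single (Fin.last m) ?_]
  · simp only [submatrix_apply, Fin.succAbove_last]
    rw [submatrix_submatrix, xmat_submatrix C (Fin.castSucc ∘ Fin.castSucc)
      ((Fin.last m).castSucc.succAbove ∘ Fin.castSucc) (fun _ => rfl)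
      (fun x => by simp [Fin.succAbove, Fin.lt_def]), Fin.succAbove_castSucc_self, Fin.succ_last,
      xmat_apply_of_le C (Or.inr (by simp only [Fin.val_last]; omega))]
    simp [detX]
  · intro r hr
    simp [Fin.succAbove_last, hcol r hr]

lemma detX_succ_succ {m : ℕ} (h : d ≤ m + 1) :
    detX d C (m + 2) = 2 * detX d C (m + 1) - detX d C m := by
  have hrow : ∀ j : Fin (m + 2), j ≠ (Fin.last m).castSucc → j ≠ Fin.last (m + 1) →
      Xmat d C (m + 2) (Fin.last (m + 1)) j = 0 := by
    intro j hjp hjl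
    rw [xmat_apply_of_le C (Or.inl (by simp only [Fin.val_last]; omega))]
    simp only [ne_eq, Fin.ext_iff, Fin.val_last, Fin.val_castSucc] at hjp hjl ⊢
    omega
  have hL : (Xmat d C (m + 2)).submatrix (Fin.last (m + 1)).succAbove
      (Fin.last (m + 1)).succAbove = Xmat d C (m + 1) := by
    rw [Fin.succAbove_last]
    exact xmat_submatrix C _ _ (fun _ => rfl) (fun _ => rfl)
  -- Expand along the last row, which is `(0, …, 0, -1, 2)`.
  rw [detX, det_succ_row _ (Fin.last (m + 1)),
    Fintype.sum_eq_add (Fin.last m).castSucc (Fin.last (m + 1)) ?_ ?_, hL,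
    det_xmat_submatrix_succAbove_last_castSucc C h]
  · rw [xmat_apply_of_le C (Or.inl (by simp only [Fin.val_last]; omega)),
      xmat_apply_of_le C (Or.inl (by simp only [Fin.val_last]; omega))]
    simp [detX, mul_comm, sub_eq_neg_add]
  · exact (Fin.castSucc_lt_last _).ne
  · rintro j ⟨hjp, hjl⟩
    rw [hrow j hjp hjl, mul_zero, zero_mul]

end Determinants

section Progression

variable {e : ℕ} (C : Matrix (Fin (e + 1)) (Fin (e + 1)) ℤ)

lemma Δdiff_succ : Δdiff (e + 1) C = detX (e + 1) C (e + 1) - detX (e + 1) C e := rfl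

lemma detX_succ {k : ℕ} (hk : e ≤ k) :
    detX (e + 1) C (k + 1) = detX (e + 1) C k + Δdiff (e + 1) C := by
  induction k, hk using Nat.le_induction with
  | base => rw [Δdiff_succ]; ring
  | succ k hk ih =>
    rw [detX_succ_succ C (by omega), ih]
    ring

lemma detX_add {k : ℕ} (hk : e ≤ k) (j : ℕ) :
    detX (e + 1) C (k + j) = detX (e + 1) C k + j * Δdiff (e + 1) C := by
  induction j with
  | zero => simp
  | succ j ih =>
    rw [← add_assoc, detX_succ C (by omega), ih]
    push_cast
    ring

end Progression

section RootLattice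

open Matrix

variable {d : ℕ} (C : Matrix (Fin d) (Fin d) ℤ) {n : ℕ}

lemma mem_qlat_iff {w : Fin n → ℤ} : w ∈ Qlat d C n ↔ ∃ x, Xmat d C n *ᵥ x = w := by
  rw [show Qlat d C n = LinearMap.range (Xmat d C n).mulVecLin by rw [range_mulVecLin]; rfl]
  rfl

lemma mulVec_mem_qlat (x : Fin n → ℤ) : Xmat d C n *ᵥ x ∈ Qlat d C n :=
  (mem_qlat_iff C).2 ⟨x, rfl⟩

lemma detX_smul_mem_qlat (v : Fin n → ℤ) : detX d C n • v ∈ Qlat d C n := by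
  have := mulVec_mem_qlat C ((Xmat d C n).adjugate *ᵥ v)
  rwa [mulVec_mulVec, mul_adjugate, smul_mulVec, one_mulVec] at this

lemma detX_dvd_of_smul_single_last_mem {k : ℕ} {c : ℤ}
    (h : c • Pi.single (Fin.last k) 1 ∈ Qlat d C (k + 1)) :
    detX d C (k + 1) ∣ c * detX d C k := by
  obtain ⟨x, hx⟩ := (mem_qlat_iff C).1 h
  have hadj : detX d C (k + 1) • x
      = c • (Xmat d C (k + 1)).adjugate *ᵥ Pi.single (Fin.last k) 1 := by
    rw [← mulVec_smul, ← hx, mulVec_mulVec, adjugate_mul, smul_mulVec, one_mulVec, detX]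
  have := congrFun hadj (Fin.last k)
  rw [mulVec_single_one, Pi.smul_apply, Pi.smul_apply, col_apply, adjugate_xmat_last] at this
  exact ⟨x (Fin.last k), by simpa [mul_comm] using this.symm⟩

end RootLattice

section Tail

variable {d : ℕ} (C : Matrix (Fin d) (Fin d) ℤ) {n : ℕ}

-- Indexed by `ℕ` so that `natSingle n n = 0` can stand for the missing `ωₙ` in the tail relations.
def natSingle (n k : ℕ) : Fin n → ℤ := fun r => if (r : ℕ) = k then 1 else 0

lemma fw_eq_natSingle (i : Fin n) : fw n i = natSingle n i := by
  ext r
  simp [fw, natSingle, Pi.single_apply, Fin.ext_iff]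

lemma natSingle_self : natSingle n n = 0 := by
  ext r
  simp [natSingle, r.isLt.ne]

lemma col_eq_of_le {j : ℕ} (hj : d ≤ j + 1) (hjn : j + 1 < n) :
    col d C n ⟨j + 1, hjn⟩
      = (2 : ℤ) • natSingle n (j + 1) - natSingle n j - natSingle n (j + 2) := by
  ext r
  simp only [col, xmat_apply_of_le C (i := r) (j := ⟨j + 1, hjn⟩) (Or.inr hj),
    natSingle, Pi.sub_apply, Pi.smul_apply, smul_eq_mul]
  split_ifs <;> omega

lemma mkQ_col (j : Fin n) : (Qlat d C n).mkQ (col d C n j) = 0 :=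
  (Submodule.Quotient.mk_eq_zero _).2 (Submodule.subset_span ⟨j, rfl⟩)

lemma mkQ_natSingle_tail {i : ℕ} (hi : d ≤ i + 1) (hin : i ≤ n) :
    (Qlat d C n).mkQ (natSingle n i)
      = ((n : ℤ) - i) • (Qlat d C n).mkQ (natSingle n (n - 1)) := by
  rcases (show i = n ∨ i + 1 = n ∨ i + 2 ≤ n by omega) with rfl | rfl | h
  · simp [natSingle_self]
  · simp
  · have h1 := mkQ_natSingle_tail (i := i + 1) (by omega) (by omega)
    have h2 := mkQ_natSingle_tail (i := i + 2) (by omega) (by omega)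
    have hcol := mkQ_col C (n := n) ⟨i + 1, by omega⟩
    rw [col_eq_of_le C hi (by omega), map_sub, map_sub, map_smul] at hcol
    push_cast at h1 h2
    linear_combination (norm := module) 2 • h1 - h2 - hcol
termination_by n - i

end Tail

section Extensible

variable {e : ℕ} (C : Matrix (Fin (e + 1)) (Fin (e + 1)) ℤ) {n : ℕ}

lemma neg_smul_mkQ_natSingle_tail {i : ℕ} (hi : e + 1 ≤ i) (hin : i < n) :
    -Δdiff (e + 1) C • (Qlat (e + 1) C n).mkQ (natSingle n i)
      = detX (e + 1) C i • (Qlat (e + 1) C n).mkQ (natSingle n (n - 1)) := by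
  set ωn := (Qlat (e + 1) C n).mkQ (natSingle n (n - 1))
  have hdet : detX (e + 1) C n • ωn = 0 := by
    rw [← map_smul]
    exact (Submodule.Quotient.mk_eq_zero _).2 (detX_smul_mem_qlat C _)
  have hprog := detX_add C (k := i) (by omega) (n - i)
  rw [Nat.add_sub_cancel' hin.le, Nat.cast_sub hin.le] at hprog
  rw [mkQ_natSingle_tail C (by omega) hin.le]
  linear_combination (norm := module) hprog • ωn - hdet

def decCorner : Matrix (Fin (e + 1)) (Fin (e + 1)) ℤ :=
  C - Matrix.single (Fin.last e) (Fin.last e) 1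

lemma det_decCorner : (decCorner C).det = Δdiff (e + 1) C := by
  have hrow : decCorner C
      = C.updateRow (Fin.last e) (C (Fin.last e) + (-1 : ℤ) • Pi.single (Fin.last e) 1) := by
    ext i j
    by_cases hi : i = Fin.last e
    · subst hi
      by_cases hj : j = Fin.last e
      · subst hj; simp [decCorner, sub_eq_add_neg]
      · simp [decCorner, hj, Matrix.single_apply_of_col_ne _ _ (Ne.symm hj)]
    · simp [decCorner, hi, Matrix.single_apply_of_row_ne (Ne.symm hi)]
  rw [hrow, Matrix.det_updateRow_add, Matrix.det_updateRow_smul, Matrix.updateRow_eq_self,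
    ← Matrix.adjugate_apply]
  have hminor := adjugate_xmat_last C e
  rw [xmat_self] at hminor
  rw [hminor, Δdiff_succ, detX, detX, xmat_self]
  ring

lemma mulVec_eq_decCorner_mulVec (u : Fin (e + 1) → ℤ) :
    C *ᵥ u = decCorner C *ᵥ u + u (Fin.last e) • Pi.single (Fin.last e) 1 := by
  ext r
  simp [decCorner, Matrix.sub_mulVec, Matrix.single_mulVec, Function.update_apply, Pi.single_apply]

lemma xmat_mulVec_append (m : ℕ) (u : Fin (e + 1) → ℤ) :
    Xmat (e + 1) C (e + 1 + m) *ᵥ Fin.append u 0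
      = Fin.append (C *ᵥ u) 0 - u (Fin.last e) • natSingle (e + 1 + m) (e + 1) := by
  ext r
  have hsum : (Xmat (e + 1) C (e + 1 + m) *ᵥ Fin.append u 0) r
      = ∑ k, Xmat (e + 1) C (e + 1 + m) r (Fin.castAdd m k) * u k := by
    simp [Matrix.mulVec, dotProduct, Fin.sum_univ_add]
  rw [hsum]
  refine Fin.addCases (fun r => ?_) (fun r => ?_) r
  · have : (r : ℕ) ≠ e + 1 := by omega
    simp [Xmat, natSingle, Matrix.mulVec, dotProduct, Fin.is_le, this]
  · rw [Fintype.sum_eq_single (Fin.last e) fun k hk => ?_]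
    · rw [xmat_apply_of_le C (Or.inl (by simp only [Fin.val_natAdd]; omega))]
      simp only [Fin.val_natAdd, Fin.val_castAdd, Fin.val_last, natSingle, Fin.append_right,
        Pi.sub_apply, Pi.smul_apply, Pi.zero_apply, smul_eq_mul]
      split_ifs <;> omega
    · rw [xmat_apply_of_le C (Or.inl (by simp only [Fin.val_natAdd]; omega))]
      simp only [ne_eq, Fin.ext_iff, Fin.val_last] at hk
      simp only [Fin.val_natAdd, Fin.val_castAdd]
      split_ifs <;> omega

lemma neg_smul_mkQ_natSingle_block (m : ℕ) (i : Fin (e + 1)) :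
    -Δdiff (e + 1) C • (Qlat (e + 1) C (e + 1 + m)).mkQ (natSingle (e + 1 + m) i)
      = (decCorner C).adjugate (Fin.last e) i •
          (Qlat (e + 1) C (e + 1 + m)).mkQ (natSingle (e + 1 + m) (e + 1 + m - 1)) := by
  set u := (decCorner C).adjugate *ᵥ Pi.single i 1
  have hu : u (Fin.last e) = (decCorner C).adjugate (Fin.last e) i := by
    simp [u]
  have hCu : Fin.append (C *ᵥ u) (0 : Fin m → ℤ)
      = Δdiff (e + 1) C • natSingle (e + 1 + m) i
        + u (Fin.last e) • natSingle (e + 1 + m) e := by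
    rw [mulVec_eq_decCorner_mulVec, Matrix.mulVec_mulVec, Matrix.mul_adjugate, det_decCorner,
      Matrix.smul_mulVec, Matrix.one_mulVec]
    ext r
    refine Fin.addCases (fun r => ?_) (fun r => ?_) r
    · simp [natSingle, Pi.single_apply, Fin.ext_iff]
    · simp only [natSingle, Fin.append_right, Pi.add_apply, Pi.smul_apply, Pi.zero_apply,
        Fin.val_natAdd, smul_eq_mul]
      split_ifs <;> omega
  have hmem := mulVec_mem_qlat C (Fin.append u (0 : Fin m → ℤ))
  rw [xmat_mulVec_append, hCu, hu] at hmem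
  have h0 := (Submodule.Quotient.mk_eq_zero _).2 hmem
  rw [← Submodule.mkQ_apply, map_sub, map_add, map_smul, map_smul, map_smul] at h0
  have he := mkQ_natSingle_tail C (n := e + 1 + m) (i := e) (by omega) (by omega)
  have he1 := mkQ_natSingle_tail C (n := e + 1 + m) (i := e + 1) (by omega) (by omega)
  push_cast at he he1
  set a := (decCorner C).adjugate (Fin.last e) i
  linear_combination (norm := module) a • he - a • he1 - h0

def aSeq (i : ℕ) : ℤ :=
  if h : i < e + 1 then (decCorner C).adjugate (Fin.last e) ⟨i, h⟩ else detX (e + 1) C i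

lemma aSeq_of_le {i : ℕ} (h : e + 1 ≤ i) : aSeq C i = detX (e + 1) C i :=
  dif_neg (by omega)

lemma aSeq_spec : ASeq (e + 1) C (aSeq C) := by
  intro n hn _ i
  obtain ⟨m, rfl⟩ := Nat.exists_eq_add_of_le hn
  refine (Submodule.Quotient.eq _).1 ?_
  simp only [← Submodule.mkQ_apply, map_smul, fw_eq_natSingle, lastFin]
  by_cases hi : (i : ℕ) < e + 1
  · rw [aSeq, dif_pos hi]
    exact neg_smul_mkQ_natSingle_block C m ⟨i, hi⟩
  · rw [aSeq_of_le C (by omega)]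
    exact neg_smul_mkQ_natSingle_tail C (by omega) i.isLt

lemma isCoprime_detX_succ (hcop : IsCoprime (Δdiff (e + 1) C) (detX (e + 1) C (e + 1)))
    {k : ℕ} (hk : e + 1 ≤ k) : IsCoprime (detX (e + 1) C (k + 1)) (detX (e + 1) C k) := by
  obtain ⟨j, rfl⟩ := Nat.exists_eq_add_of_le hk
  have hΔ : IsCoprime (Δdiff (e + 1) C) (detX (e + 1) C (e + 1 + j)) := by
    rw [detX_add C (by omega) j]
    exact hcop.add_mul_right_right j
  rw [detX_succ C (by omega)]
  simpa [add_comm] using hΔ.symm.add_mul_left_right 1 |>.symm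

end Extensible

lemma ASeq.unique {e : ℕ} {C : Matrix (Fin (e + 1)) (Fin (e + 1)) ℤ}
    (hΔ : Δdiff (e + 1) C ≠ 0) (hcop : IsCoprime (Δdiff (e + 1) C) (detX (e + 1) C (e + 1)))
    {a a' : ℕ → ℤ} (ha : ASeq (e + 1) C a) (ha' : ASeq (e + 1) C a') : a = a' := by
  funext i
  refine sub_eq_zero.1 (Int.eq_zero_of_forall_add_mul_dvd (a := detX (e + 1) C (e + i + 2)) hΔ ?_)
  intro j hne
  set k := e + i + 1 + j
  have hk : detX (e + 1) C (k + 1) = detX (e + 1) C (e + i + 2) + j * Δdiff (e + 1) C := by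
    rw [← detX_add C (by omega) j]
    congr 1
    omega
  rw [← hk] at hne ⊢
  have hmem : (a i - a' i) • Pi.single (Fin.last k) 1 ∈ Qlat (e + 1) C (k + 1) := by
    have := Submodule.sub_mem _ (ha' (k + 1) (by omega) hne ⟨i, by omega⟩)
      (ha (k + 1) (by omega) hne ⟨i, by omega⟩)
    rwa [sub_sub_sub_cancel_left, ← sub_smul] at this
  exact (isCoprime_detX_succ C hcop (by omega)).dvd_of_dvd_mul_right
    (detX_dvd_of_smul_single_last_mem C hmem)

/-- Nodes are 0-based: `a i` is the paper's `a_{i+1}`, and `a i = detX d C i` is its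
`a_{i+1} = det C(X_i)`. -/
theorem tensor_stab_a_sequence (d : ℕ) (hd : 1 ≤ d)
    (C : Matrix (Fin d) (Fin d) ℤ) (hX : Extensible d C) :
    ∃ a : ℕ → ℤ, ASeq d C a ∧
      (∀ i, d ≤ i → a i = detX d C i) ∧
      (∀ a' : ℕ → ℤ, ASeq d C a' → ∀ i, a' i = a i) := by
  obtain ⟨e, rfl⟩ : ∃ e, d = e + 1 := ⟨d - 1, by omega⟩
  obtain ⟨hΔ, -, hcop⟩ := hX
  exact ⟨aSeq C, aSeq_spec C, fun i => aSeq_of_le C,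
    fun a' ha' i => congrFun (ASeq.unique hΔ hcop ha' (aSeq_spec C)) i⟩
end

section
/- Let X be extensible and λ, μ, ν ∈ H_2^+ (pairs of finitely supported nonnegative integer sequences). If the tensor product multiplicity c_{λμ}^ν(n) of L(ν^{(n)}) in L(λ^{(n)}) ⊗ L(μ^{(n)}) is positive for infinitely many n, then |λ|_X + |μ|_X = |ν|_X. -/
open scoped BigOperators

def wt (n : ℕ) (x y : ℕ → ℤ) : Fin n → ℤ :=
  (∑ i : Fin n, x (i : ℕ) • fw n i) + ∑ j : Fin n, y (j : ℕ) • fw n j.rev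

def Qpos (d : ℕ) (C : Matrix (Fin d) (Fin d) ℤ) (n : ℕ) : Set (Fin n → ℤ) :=
  { v | ∃ m : Fin n → ℕ, v = ∑ i : Fin n, (m i : ℤ) • col d C n i }

def FinSuppSeq (x : ℕ → ℤ) : Prop := ∃ L, ∀ i, L ≤ i → x i = 0

def nob (d : ℕ) (C : Matrix (Fin d) (Fin d) ℤ) (a : ℕ → ℤ)
    (x y : ℕ → ℤ) (lx ly : ℕ) : ℤ :=
  (∑ i ∈ Finset.range lx, a i * x i) - Δdiff d C * ∑ j ∈ Finset.range ly, ((j : ℤ) + 1) * y j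

def coeffPat (l r n : ℕ) (p q : ℕ → ℤ) (s : ℤ) (m : Fin n) : ℤ :=
  if (m : ℕ) + 1 < l then p (m : ℕ)
  else if (m : ℕ) ≤ n - r then s
  else q (n - 1 - (m : ℕ))

def StableGE (d : ℕ) (C : Matrix (Fin d) (Fin d) ℤ) (x₁ y₁ x₂ y₂ : ℕ → ℤ) : Prop :=
  ∃ (l r : ℕ) (p q : ℕ → ℤ) (s : ℤ),
    (∀ i, 0 ≤ p i) ∧ (∀ j, 0 ≤ q j) ∧ 0 ≤ s ∧
    ∀ n, l + r ≤ n →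
      wt n x₁ y₁ - wt n x₂ y₂ = ∑ m : Fin n, coeffPat l r n p q s m • col d C n m

lemma Xmat_sub (d : ℕ) (C : Matrix (Fin d) (Fin d) ℤ) (m : ℕ) :
    (Xmat d C (m+1)).submatrix Fin.castSucc Fin.castSucc = Xmat d C m := by
  ext i j
  rfl

-- entry of last row

lemma Xmat_last_row (d : ℕ) (C : Matrix (Fin d) (Fin d) ℤ) (n : ℕ) (hdn : d + 1 ≤ n)
    (i j : Fin n) (hi : (i:ℕ) = n - 1) (hj : (j:ℕ) + 2 ≤ n) :
    Xmat d C n i j = if (j:ℕ) + 2 = n then -1 else 0 := by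
  have hic : ¬ ((i:ℕ) < d ∧ (j:ℕ) < d) := by omega
  simp only [Xmat, Matrix.of_apply, dif_neg hic]
  split_ifs <;> omega

lemma detX_rec (d : ℕ) (hd : 1 ≤ d) (C : Matrix (Fin d) (Fin d) ℤ) (m : ℕ) (hdm : d ≤ m + 1) :
    detX d C (m+2) = 2 * detX d C (m+1) - detX d C m := by
  set A := Xmat d C (m+2) with hA
  have hexp := Matrix.det_succ_row A (Fin.last (m+1))
  rw [Fin.sum_univ_castSucc, Fin.sum_univ_castSucc] at hexp
  have hzero : ∀ j : Fin m,
      (-1 : ℤ) ^ ((Fin.last (m+1) : ℕ) + ((j.castSucc.castSucc : Fin (m+2)) : ℕ)) *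
        A (Fin.last (m+1)) j.castSucc.castSucc *
        (A.submatrix (Fin.last (m+1)).succAbove (j.castSucc.castSucc).succAbove).det = 0 := by
    intro j
    have hj : (j:ℕ) < m := j.isLt
    have : A (Fin.last (m+1)) j.castSucc.castSucc = 0 := by
      simp only [hA, Xmat, Matrix.of_apply, Fin.val_last, Fin.coe_castSucc]
      rw [dif_neg (by omega), if_neg (by omega), if_neg (by omega)]
    rw [this]; ring
  rw [Finset.sum_eq_zero (fun j _ => hzero j), zero_add] at hexp
  have e1 : A (Fin.last (m+1)) ((Fin.last m).castSucc) = -1 := by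
    simp only [hA, Xmat, Matrix.of_apply, Fin.val_last, Fin.coe_castSucc]
    rw [dif_neg (by omega), if_neg (by omega)]
    simp
  have e2 : A (Fin.last (m+1)) (Fin.last (m+1)) = 2 := by
    simp only [hA, Xmat, Matrix.of_apply, Fin.val_last]
    rw [dif_neg (by omega)]
    simp
  have m2 : (A.submatrix (Fin.last (m+1)).succAbove (Fin.last (m+1)).succAbove).det
      = detX d C (m+1) := by
    rw [Fin.succAbove_last, hA, Xmat_sub]; rfl
  -- the (last, m) minor
  set B := A.submatrix (Fin.last (m+1)).succAbove ((Fin.last m).castSucc).succAbove with hB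
  have hcol : ((Fin.last m).castSucc : Fin (m+2)).succAbove (Fin.last m) = Fin.last (m+1) := by
    rw [Fin.succAbove_of_le_castSucc _ _ (le_refl _), Fin.succ_last]
  have hcol2 : ∀ k : Fin m, ((Fin.last m).castSucc : Fin (m+2)).succAbove k.castSucc
      = (k.castSucc).castSucc := by
    intro k
    rw [Fin.succAbove_of_castSucc_lt]
    exact Fin.lt_def.mpr (by simpa using k.isLt)
  have m1 : B.det = - detX d C m := by
    have hexpB := Matrix.det_succ_column B (Fin.last m)
    rw [Fin.sum_univ_castSucc] at hexpB
    have hz : ∀ i : Fin m,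
        (-1 : ℤ) ^ (((i.castSucc : Fin (m+1)) : ℕ) + ((Fin.last m : Fin (m+1)) : ℕ)) *
          B i.castSucc (Fin.last m) *
          (B.submatrix (i.castSucc).succAbove (Fin.last m).succAbove).det = 0 := by
      intro i
      have hi : (i:ℕ) < m := i.isLt
      have : B i.castSucc (Fin.last m) = 0 := by
        simp only [hB, Matrix.submatrix_apply, hcol, Fin.succAbove_last, hA, Xmat,
          Matrix.of_apply, Fin.val_last, Fin.coe_castSucc]
        rw [dif_neg (by omega), if_neg (by omega), if_neg (by omega)]
      rw [this]; ring
    rw [Finset.sum_eq_zero (fun i _ => hz i), zero_add] at hexpB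
    have eB : B (Fin.last m) (Fin.last m) = -1 := by
      simp only [hB, Matrix.submatrix_apply, hcol, Fin.succAbove_last, hA, Xmat,
        Matrix.of_apply, Fin.val_last, Fin.coe_castSucc]
      rw [dif_neg (by omega), if_neg (by omega)]
      simp
    have hM : (B.submatrix (Fin.last m).succAbove (Fin.last m).succAbove).det = detX d C m := by
      have : B.submatrix (Fin.last m).succAbove (Fin.last m).succAbove = Xmat d C m := by
        ext i k
        simp only [Fin.succAbove_last, hB, Matrix.submatrix_apply, hcol2]
        rfl
      rw [this]; rfl
    rw [eB, hM] at hexpB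
    rw [hexpB]
    have : (-1:ℤ)^(((Fin.last m : Fin (m+1)) : ℕ) + ((Fin.last m : Fin (m+1)) : ℕ)) = 1 := by
      simp only [Fin.val_last]
      rw [show m + m = 2*m by ring, pow_mul]; simp
    rw [this]; ring
  rw [m1, m2, e1, e2] at hexp
  have : A.det = detX d C (m+2) := rfl
  rw [this] at hexp
  rw [hexp]
  simp only [Fin.val_last, Fin.coe_castSucc]
  have h1 : (-1:ℤ)^(m+1+m) = -1 := by
    rw [show m+1+m = 2*m+1 by ring, pow_succ, pow_mul]; simp
  have h2 : (-1:ℤ)^(m+1+(m+1)) = 1 := by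
    rw [show m+1+(m+1) = 2*(m+1) by ring, pow_mul]; simp
  rw [h1, h2]; ring

lemma detX_linear (d : ℕ) (hd : 1 ≤ d) (C : Matrix (Fin d) (Fin d) ℤ) :
    ∀ k : ℕ, detX d C (d + k) = detX d C d + (k : ℤ) * Δdiff d C := by
  have base1 : detX d C (d + 1) = detX d C d + Δdiff d C := by
    have := detX_rec d hd C (d - 1) (by omega)
    rw [show d - 1 + 2 = d + 1 by omega, show d - 1 + 1 = d by omega] at this
    rw [this, Δdiff]; ring
  have step : ∀ k, detX d C (d + k) = detX d C d + (k:ℤ) * Δdiff d C →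
      detX d C (d + (k+1)) = detX d C d + ((k:ℤ)+1) * Δdiff d C →
      detX d C (d + (k+2)) = detX d C d + ((k:ℤ)+2) * Δdiff d C := by
    intro k h1 h2
    have := detX_rec d hd C (d + k) (by omega)
    rw [show d + k + 2 = d + (k+2) by omega, show d + k + 1 = d + (k+1) by omega] at this
    rw [this, h1, h2]; ring
  have key : ∀ k, detX d C (d + k) = detX d C d + (k:ℤ) * Δdiff d C ∧
      detX d C (d + (k+1)) = detX d C d + ((k:ℤ)+1) * Δdiff d C := by
    intro k
    induction k with
    | zero => exact ⟨by simp, by simpa using base1⟩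
    | succ k ih =>
      refine ⟨by simpa using ih.2, ?_⟩
      have := step k ih.1 (by simpa using ih.2)
      have e : d + (k+1+1) = d + (k+2) := by omega
      rw [e, this]; push_cast; ring
  intro k
  exact (key k).1

lemma detX_coprime (d : ℕ) (hd : 1 ≤ d) (C : Matrix (Fin d) (Fin d) ℤ)
    (hcop : IsCoprime (Δdiff d C) (detX d C d)) (n : ℕ) (hn : d ≤ n) :
    IsCoprime (Δdiff d C) (detX d C n) := by
  obtain ⟨k, rfl⟩ := Nat.exists_eq_add_of_le hn
  rw [detX_linear d hd C k]
  have := hcop.add_mul_left_right (k : ℤ)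
  rwa [mul_comm] at this

lemma detX_coprime_succ (d : ℕ) (hd : 1 ≤ d) (C : Matrix (Fin d) (Fin d) ℤ)
    (hcop : IsCoprime (Δdiff d C) (detX d C d)) (n : ℕ) (hn : d + 1 ≤ n) :
    IsCoprime (detX d C n) (detX d C (n - 1)) := by
  have h1 : IsCoprime (detX d C n) (Δdiff d C) :=
    (detX_coprime d hd C hcop n (by omega)).symm
  have h2 : detX d C (n-1) = detX d C n + Δdiff d C * (-1) := by
    obtain ⟨k, rfl⟩ : ∃ k, n = d + (k + 1) := ⟨n - d - 1, by omega⟩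
    rw [show d + (k+1) - 1 = d + k by omega, detX_linear d hd C, detX_linear d hd C]
    push_cast; ring
  rw [h2]
  obtain ⟨u, v, huv⟩ := h1
  exact ⟨u + v, -v, by linear_combination huv⟩

lemma col_mem (d : ℕ) (C : Matrix (Fin d) (Fin d) ℤ) (n : ℕ) (j : Fin n) :
    col d C n j ∈ Qlat d C n :=
  Submodule.subset_span ⟨j, rfl⟩

lemma col_eq (d : ℕ) (hd : 1 ≤ d) (C : Matrix (Fin d) (Fin d) ℤ) (n K : ℕ)
    (hK1 : d ≤ K) (hK2 : K + 2 ≤ n) :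
    col d C n ⟨K, by omega⟩ =
      (2:ℤ) • fw n ⟨K, by omega⟩ - fw n ⟨K-1, by omega⟩ - fw n ⟨K+1, by omega⟩ := by
  funext i
  simp only [col, Xmat, Matrix.of_apply, fw, Pi.sub_apply, Pi.smul_apply, Pi.single_apply,
    smul_eq_mul, Fin.ext_iff]
  rw [dif_neg (by omega)]
  split_ifs <;> omega

lemma col_last (d : ℕ) (hd : 1 ≤ d) (C : Matrix (Fin d) (Fin d) ℤ) (n : ℕ)
    (hdn : d + 2 ≤ n) :
    col d C n ⟨n-1, by omega⟩ = (2:ℤ) • fw n ⟨n-1, by omega⟩ - fw n ⟨n-2, by omega⟩ := by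
  funext i
  simp only [col, Xmat, Matrix.of_apply, fw, Pi.sub_apply, Pi.smul_apply, Pi.single_apply,
    smul_eq_mul, Fin.ext_iff]
  rw [dif_neg (by omega)]
  split_ifs <;> omega

lemma chain (d : ℕ) (hd : 1 ≤ d) (C : Matrix (Fin d) (Fin d) ℤ) (n : ℕ) :
    ∀ j : ℕ, ∀ _hj : j + d + 1 ≤ n,
      fw n ⟨n-1-j, by omega⟩ - ((j:ℤ)+1) • fw n ⟨n-1, by omega⟩ ∈ Qlat d C n := by
  intro j
  induction j using Nat.strong_induction_on with
  | _ j ih =>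
    match j with
    | 0 =>
      intro hj
      simp only [Nat.sub_zero, Nat.cast_zero, zero_add, one_smul, sub_self]
      exact Submodule.zero_mem _
    | 1 =>
      intro hj
      have hmem := col_mem d C n ⟨n-1, by omega⟩
      rw [col_last d hd C n (by omega)] at hmem
      have heq : fw n ⟨n-1-1, by omega⟩ - (((1:ℕ):ℤ)+1) • fw n ⟨n-1, by omega⟩
          = -((2:ℤ) • fw n ⟨n-1, by omega⟩ - fw n ⟨n-2, by omega⟩) := by
      
        have e1 : (⟨n-1-1, by omega⟩ : Fin n) = ⟨n-2, by omega⟩ := by simp only [Fin.mk.injEq]; omega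
        rw [e1]
        push_cast
        module
      rw [heq]
      exact Submodule.neg_mem _ hmem
    | (k+2) =>
      intro hj
      have hmem := col_mem d C n ⟨n-2-k, by omega⟩
      rw [col_eq d hd C n (n-2-k) (by omega) (by omega)] at hmem
      have h1 := ih (k+1) (by omega) (by omega)
      have h0 := ih k (by omega) (by omega)
      have heq : fw n ⟨n-1-(k+2), by omega⟩ - (((k+2:ℕ):ℤ)+1) • fw n ⟨n-1, by omega⟩
          = (-1:ℤ) • ((2:ℤ) • fw n ⟨n-2-k, by omega⟩ - fw n ⟨n-2-k-1, by omega⟩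
              - fw n ⟨n-2-k+1, by omega⟩)
            + (2:ℤ) • (fw n ⟨n-1-(k+1), by omega⟩ - (((k+1:ℕ):ℤ)+1) • fw n ⟨n-1, by omega⟩)
            - (fw n ⟨n-1-k, by omega⟩ - (((k:ℕ):ℤ)+1) • fw n ⟨n-1, by omega⟩) := by
        have e1 : (⟨n-2-k-1, by omega⟩ : Fin n) = ⟨n-1-(k+2), by omega⟩ := by simp only [Fin.mk.injEq]; omega
        have e2 : (⟨n-2-k, by omega⟩ : Fin n) = ⟨n-1-(k+1), by omega⟩ := by simp only [Fin.mk.injEq]; omega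
        have e3 : (⟨n-2-k+1, by omega⟩ : Fin n) = ⟨n-1-k, by omega⟩ := by simp only [Fin.mk.injEq]; omega
        rw [e1, e2, e3]
        push_cast
        module
      rw [heq]
      exact Submodule.sub_mem _ (Submodule.add_mem _ (Submodule.smul_mem _ _ hmem)
        (Submodule.smul_mem _ _ h1)) h0

lemma dvd_of_single_mem (m : ℕ) (A : Matrix (Fin (m+1)) (Fin (m+1)) ℤ) (k : ℤ)
    (h : (k • Pi.single (Fin.last m) 1 : Fin (m+1) → ℤ) ∈
      Submodule.span ℤ (Set.range (fun j => (fun i => A i j)))) :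
    A.det ∣ k * (A.submatrix Fin.castSucc Fin.castSucc).det := by
  rw [Submodule.mem_span_range_iff_exists_fun] at h
  obtain ⟨z, hz⟩ := h
  have hmv : A.mulVec z = k • Pi.single (Fin.last m) 1 := by
    rw [← hz]
    funext i
    simp only [Matrix.mulVec, dotProduct, Finset.sum_apply, Pi.smul_apply, smul_eq_mul]
    exact Finset.sum_congr rfl fun j _ => mul_comm _ _
  have key := congrArg (fun v => (A.adjugate).mulVec v) hmv
  rw [Matrix.mulVec_mulVec, Matrix.adjugate_mul, Matrix.smul_mulVec,
    Matrix.one_mulVec] at key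
  have keylast := congrFun key (Fin.last m)
  simp only [Pi.smul_apply, smul_eq_mul] at keylast
  have hr : (A.adjugate).mulVec (k • Pi.single (Fin.last m) 1) (Fin.last m)
      = k * A.adjugate (Fin.last m) (Fin.last m) := by
    simp only [Matrix.mulVec, dotProduct, Pi.smul_apply, smul_eq_mul]
    rw [Finset.sum_eq_single (Fin.last m)]
    · simp [mul_comm]
    · intro b _ hb
      simp [Pi.single_eq_of_ne hb]
    · simp
  rw [hr] at keylast
  have hadj : A.adjugate (Fin.last m) (Fin.last m)
      = (A.submatrix Fin.castSucc Fin.castSucc).det := by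
    rw [Matrix.adjugate_fin_succ_eq_det_submatrix, Fin.succAbove_last]
    rw [show ((Fin.last m : ℕ) + (Fin.last m : ℕ)) = 2 * m by simp [Fin.val_last]; ring,
      pow_mul]
    simp
  rw [hadj] at keylast
  exact ⟨z (Fin.last m), keylast.symm⟩

lemma wt_cong (d : ℕ) (hd : 1 ≤ d) (C : Matrix (Fin d) (Fin d) ℤ) (a : ℕ → ℤ)
    (ha : ASeq d C a) (n : ℕ) (hdn : d ≤ n) (hdet : detX d C n ≠ 0)
    (x y : ℕ → ℤ) (lx ly : ℕ)
    (hx : ∀ i, lx ≤ i → x i = 0) (hy : ∀ j, ly ≤ j → y j = 0)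
    (hlx : lx ≤ n) (hly : ly + d ≤ n) :
    (-(Δdiff d C)) • wt n x y - nob d C a x y lx ly • fw n ⟨n-1, by omega⟩
      ∈ Qlat d C n := by
  set e : Fin n → ℤ := fw n ⟨n-1, by omega⟩ with he
  have hA : ∀ i : Fin n, (-(Δdiff d C)) • fw n i - a (i:ℕ) • e ∈ Qlat d C n := by
    intro i
    exact ha n hdn hdet i
  have hB : ∀ j : Fin n,
      y (j:ℕ) • ((-(Δdiff d C)) • fw n j.rev - ((-(Δdiff d C)) * (((j:ℕ):ℤ)+1)) • e)
        ∈ Qlat d C n := by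
    intro j
    by_cases hj : (j:ℕ) < ly
    · have hch := chain d hd C n (j:ℕ) (by omega)
      have hrev : (j.rev : Fin n) = ⟨n-1-(j:ℕ), by omega⟩ := by
        simp only [Fin.ext_iff, Fin.val_rev]
        omega
      have hsm := Submodule.smul_mem (Qlat d C n) (-(Δdiff d C)) hch
      have heq : (-(Δdiff d C)) • (fw n ⟨n-1-(j:ℕ), by omega⟩ - (((j:ℕ):ℤ)+1) • fw n ⟨n-1, by omega⟩)
          = (-(Δdiff d C)) • fw n ⟨n-1-(j:ℕ), by omega⟩
            - ((-(Δdiff d C)) * (((j:ℕ):ℤ)+1)) • e := by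
        rw [he]; module
      rw [heq] at hsm
      rw [hrev]
      exact Submodule.smul_mem _ _ hsm
    · have hy0 : y (j:ℕ) = 0 := hy _ (by omega)
      rw [hy0, zero_smul]
      exact Submodule.zero_mem _
  have S1 : (∑ i ∈ Finset.range lx, a i * x i) = ∑ i : Fin n, a (i:ℕ) * x (i:ℕ) := by
    rw [Fin.sum_univ_eq_sum_range (fun i => a i * x i) n]
    apply Finset.sum_subset (Finset.range_subset_range.mpr hlx)
    intro i _ hi
    rw [hx i (by simpa using hi), mul_zero]
  have S2 : (∑ j ∈ Finset.range ly, ((j:ℤ)+1) * y j)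
      = ∑ j : Fin n, (((j:ℕ):ℤ)+1) * y (j:ℕ) := by
    rw [Fin.sum_univ_eq_sum_range (fun j => ((j:ℤ)+1) * y j) n]
    apply Finset.sum_subset (Finset.range_subset_range.mpr (by omega))
    intro j _ hj
    rw [hy j (by simpa using hj), mul_zero]
  have hnob : nob d C a x y lx ly
      = (∑ i : Fin n, a (i:ℕ) * x (i:ℕ))
        - Δdiff d C * ∑ j : Fin n, (((j:ℕ):ℤ)+1) * y (j:ℕ) := by
    rw [nob, S1, S2]
  have T1 : ∀ i : Fin n, x (i:ℕ) • ((-(Δdiff d C)) • fw n i - a (i:ℕ) • e)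
      = (-(Δdiff d C)) • (x (i:ℕ) • fw n i) - (a (i:ℕ) * x (i:ℕ)) • e := by
    intro i; module
  have T2 : ∀ j : Fin n,
      y (j:ℕ) • ((-(Δdiff d C)) • fw n j.rev - ((-(Δdiff d C)) * (((j:ℕ):ℤ)+1)) • e)
      = (-(Δdiff d C)) • (y (j:ℕ) • fw n j.rev)
        + (Δdiff d C * ((((j:ℕ):ℤ)+1) * y (j:ℕ))) • e := by
    intro j; module
  have main : (-(Δdiff d C)) • wt n x y - nob d C a x y lx ly • e
      = (∑ i : Fin n, x (i:ℕ) • ((-(Δdiff d C)) • fw n i - a (i:ℕ) • e))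
        + ∑ j : Fin n,
            y (j:ℕ) • ((-(Δdiff d C)) • fw n j.rev - ((-(Δdiff d C)) * (((j:ℕ):ℤ)+1)) • e) := by
    rw [Finset.sum_congr rfl (fun i _ => T1 i), Finset.sum_congr rfl (fun j _ => T2 j),
      Finset.sum_sub_distrib, Finset.sum_add_distrib, wt, smul_add, Finset.smul_sum,
      Finset.smul_sum, hnob, sub_smul, Finset.sum_smul, Finset.mul_sum, Finset.sum_smul]
    abel
  rw [main]
  exact Submodule.add_mem _
    (Submodule.sum_mem _ (fun i _ => Submodule.smul_mem _ _ (hA i)))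
    (Submodule.sum_mem _ (fun j _ => hB j))

/-- Number-of-boxes criterion: if the multiplicity `c_{λμ}^ν(n)` of
`L(ν^{(n)})` in `L(λ^{(n)}) ⊗ L(μ^{(n)})` is positive for infinitely many `n`,
then `|λ|_X + |μ|_X = |ν|_X`.  The multiplicity is abstracted as a function
`c : ℕ → ℕ` whose positivity forces `ν^{(n)} ≡ λ^{(n)} + μ^{(n)} (mod Q(X_n))`
(every weight of the tensor product is congruent to the sum of the highest
weights modulo the root lattice). -/
theorem tensor_stab_nob_criterion (d : ℕ) (hd : 1 ≤ d)
    (C : Matrix (Fin d) (Fin d) ℤ) (hX : Extensible d C)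
    (a : ℕ → ℤ) (ha : ASeq d C a)
    (xl yl xm ym xn yn : ℕ → ℤ) (lxl lyl lxm lym lxn lyn : ℕ)
    (hxl0 : ∀ i, 0 ≤ xl i) (hyl0 : ∀ i, 0 ≤ yl i)
    (hxm0 : ∀ i, 0 ≤ xm i) (hym0 : ∀ i, 0 ≤ ym i)
    (hxn0 : ∀ i, 0 ≤ xn i) (hyn0 : ∀ i, 0 ≤ yn i)
    (hxl : ∀ i, lxl ≤ i → xl i = 0) (hyl : ∀ i, lyl ≤ i → yl i = 0)
    (hxm : ∀ i, lxm ≤ i → xm i = 0) (hym : ∀ i, lym ≤ i → ym i = 0)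
    (hxn : ∀ i, lxn ≤ i → xn i = 0) (hyn : ∀ i, lyn ≤ i → yn i = 0)
    (c : ℕ → ℕ)
    (hc : ∀ n, 0 < c n → wt n xn yn - wt n xl yl - wt n xm ym ∈ Qlat d C n)
    (hinf : {n | lyl + max d lxl ≤ n ∧ lym + max d lxm ≤ n ∧
        lyn + max d lxn ≤ n ∧ 0 < c n}.Infinite) :
    nob d C a xl yl lxl lyl + nob d C a xm ym lxm lym
      = nob d C a xn yn lxn lyn := by
  set D : ℤ := nob d C a xn yn lxn lyn - nob d C a xl yl lxl lyl
      - nob d C a xm ym lxm lym with hD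
  suffices hD0 : D = 0 by
    rw [hD] at hD0; linarith
  obtain ⟨n, hmem, hgt⟩ := hinf.exists_gt (d + 1 + (detX d C d).natAbs + D.natAbs)
  obtain ⟨h1, h2, h3, hcpos⟩ := hmem
  have hdn : d ≤ n := by omega
  -- size of the determinant
  have hval : detX d C n = detX d C d + ((n - d : ℕ):ℤ) * Δdiff d C := by
    have := detX_linear d hd C (n - d)
    rwa [show d + (n - d) = n by omega] at this
  have hΔ1 : (1:ℤ) ≤ |Δdiff d C| := Int.one_le_abs hX.1
  have hc0 : (0:ℤ) ≤ ((n - d : ℕ):ℤ) := Int.natCast_nonneg _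
  have h4 : ((n - d : ℕ):ℤ) ≤ |((n - d : ℕ):ℤ) * Δdiff d C| := by
    rw [abs_mul, abs_of_nonneg hc0]
    exact le_mul_of_one_le_right hc0 hΔ1
  have h5 : |((n - d : ℕ):ℤ) * Δdiff d C| ≤ |detX d C n| + |detX d C d| := by
    calc |((n - d : ℕ):ℤ) * Δdiff d C| = |detX d C n + (- detX d C d)| := by
          rw [hval]; ring_nf
      _ ≤ |detX d C n| + |(- detX d C d)| := abs_add_le _ _
      _ = |detX d C n| + |detX d C d| := by rw [abs_neg]
  have hcast1 : |detX d C d| = ((detX d C d).natAbs : ℤ) := Int.abs_eq_natAbs _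
  have hcast2 : |D| = (D.natAbs : ℤ) := Int.abs_eq_natAbs _
  have hbig : |D| + 2 ≤ |detX d C n| := by
    have : ((n - d : ℕ):ℤ) ≤ |detX d C n| + |detX d C d| := le_trans h4 h5
    rw [hcast1] at this
    rw [hcast2]
    have hn' : (d:ℤ) + 1 + ((detX d C d).natAbs : ℤ) + (D.natAbs : ℤ) < (n:ℤ) := by
      exact_mod_cast Int.ofNat_lt.mpr hgt
    have hnd : ((n - d : ℕ):ℤ) = (n:ℤ) - (d:ℤ) := by
      push_cast [Nat.cast_sub hdn]; ring
    omega
  have hdet : detX d C n ≠ 0 := by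
    intro h0
    rw [h0] at hbig
    simp at hbig
    have := abs_nonneg D
    omega
  -- congruences
  have Wn := wt_cong d hd C a ha n hdn hdet xn yn lxn lyn hxn hyn (by omega) (by omega)
  have Wl := wt_cong d hd C a ha n hdn hdet xl yl lxl lyl hxl hyl (by omega) (by omega)
  have Wm := wt_cong d hd C a ha n hdn hdet xm ym lxm lym hxm hym (by omega) (by omega)
  have hvQ : (-(Δdiff d C)) • (wt n xn yn - wt n xl yl - wt n xm ym) ∈ Qlat d C n :=
    Submodule.smul_mem _ _ (hc n hcpos)
  have hne : (0:ℕ) < n := by omega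
  have heq : D • fw n ⟨n-1, by omega⟩
      = ((-(Δdiff d C)) • (wt n xn yn - wt n xl yl - wt n xm ym))
        - ((-(Δdiff d C)) • wt n xn yn - nob d C a xn yn lxn lyn • fw n ⟨n-1, by omega⟩)
        + ((-(Δdiff d C)) • wt n xl yl - nob d C a xl yl lxl lyl • fw n ⟨n-1, by omega⟩)
        + ((-(Δdiff d C)) • wt n xm ym - nob d C a xm ym lxm lym • fw n ⟨n-1, by omega⟩) := by
    rw [hD]
    module
  have hQe : D • fw n ⟨n-1, by omega⟩ ∈ Qlat d C n := by
    rw [heq]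
    exact Submodule.add_mem _ (Submodule.add_mem _ (Submodule.sub_mem _ hvQ Wn) Wl) Wm
  -- divisibility
  obtain ⟨m, rfl⟩ : ∃ m, n = m + 1 := ⟨n - 1, by omega⟩
  have hdvd1 : (Xmat d C (m+1)).det ∣
      D * ((Xmat d C (m+1)).submatrix Fin.castSucc Fin.castSucc).det :=
    dvd_of_single_mem m (Xmat d C (m+1)) D hQe
  rw [Xmat_sub] at hdvd1
  have hcop : IsCoprime (detX d C (m+1)) (detX d C m) := by
    have := detX_coprime_succ d hd C hX.2.2 (m+1) (by omega)
    rwa [show m + 1 - 1 = m by omega] at this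
  have hdvd : detX d C (m+1) ∣ D := hcop.dvd_of_dvd_mul_right hdvd1
  by_contra hD0
  have habs : |detX d C (m+1)| ≤ |D| :=
    Int.le_of_dvd (abs_pos.mpr hD0) ((abs_dvd _ _).mpr ((dvd_abs _ _).mpr hdvd))
  omega
end
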